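/- Let γ ∈ (0,1). There exists a constant C(γ) > 0 such that for every integer n ≥ 2, every M > 0, and every continuous F : ℝ → ℝ with |F(t)| ≤ M·e^{γ|t|} for all t, the function u_n(t) := [(n + tanh t)/(2n(1−n²))]·e^{−nt}·∫_{−∞}^t (n − tanh s)·e^{ns}·F(s) ds + [(n − tanh t)/(2n(1−n²))]·e^{nt}·∫_t^{∞} (n + tanh s)·e^{−ns}·F(s) ds is well defined (both integrals converge absolutely), is twice differentiable, satisfies u_n''(t) + (2 sech²(t) − n²)·u_n(t) = F(t) for all t ∈ ℝ, and obeys the bound |u_n(t)| ≤ (C(γ)/(n² + 1))·M·e^{γ|t|} for all t ∈ ℝ. -/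

import Mathlib

/-!
The operator `∂ₜ² + 2 sech² t − n²` is even in `t`, and its kernel is spanned by
`ψ(t) = (n + tanh t) e^{−nt}` and `ψ(−t) = (n − tanh t) e^{nt}`, whose Wronskian is the constant
`2n(n² − 1)`. So `u` is the variation-of-parameters solution, each kernel element paired with the
integral over the half-line on which it decays. Since `|F(s)| ≤ M e^{γ|s|}` with `γ < n`, the
integrand of `∫_{−∞}^t` is dominated by `e^{(n−γ)s}`, which makes the integral converge and
bounds it by `O(M e^{nt + γ|t|}/(n − γ))`; multiplying by `ψ(t) = O(n e^{−nt})` and dividing by the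
Wronskian gives the `O(M e^{γ|t|}/n²)` bound. The reflection `t ↦ −t` exchanges the two halves
of the formula, so the integral over `[t, ∞)` needs no separate treatment.
-/

open MeasureTheory Set Real

theorem Real.hasDerivAt_tanh (t : ℝ) : HasDerivAt tanh (1 - tanh t ^ 2) t := by
  rw [show tanh = fun x => sinh x / cosh x from funext tanh_eq_sinh_div_cosh]
  refine ((hasDerivAt_sinh t).div (hasDerivAt_cosh t) (cosh_pos t).ne').congr_deriv ?_
  field_simp

@[fun_prop]
theorem Real.continuous_tanh : Continuous tanh :=
  continuous_iff_continuousAt.2 fun t => (hasDerivAt_tanh t).continuousAt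

theorem Real.inv_cosh_sq (t : ℝ) : (cosh t)⁻¹ ^ 2 = 1 - tanh t ^ 2 := by
  rw [tanh_eq_sinh_div_cosh]
  field_simp
  linarith [cosh_sq_sub_sinh_sq t]

section HalfLine

variable {E : Type*} [NormedAddCommGroup E] [NormedSpace ℝ E] {g : ℝ → E}

theorem HasDerivAt.comp_neg {f : ℝ → E} {f' : E} {t : ℝ} (hf : HasDerivAt f f' (-t)) :
    HasDerivAt (fun x => f (-x)) (-f') t := by
  simpa [Function.comp_def] using hf.scomp t (hasDerivAt_neg t)

theorem integral_Ici_eq_integral_Iic_comp_neg (g : ℝ → E) (t : ℝ) :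
    ∫ s in Ici t, g s = ∫ s in Iic (-t), g (-s) := by
  rw [integral_comp_neg_Iic, neg_neg, integral_Ici_eq_integral_Ioi]

theorem hasDerivAt_integral_Iic [CompleteSpace E] (hg : Continuous g)
    (hint : ∀ x, IntegrableOn g (Iic x)) (t : ℝ) :
    HasDerivAt (fun x => ∫ s in Iic x, g s) (g t) t := by
  have hsplit : (fun x => ∫ s in Iic x, g s) = fun x => (∫ s in Iic 0, g s) + ∫ s in 0..x, g s :=
    funext fun x => by rw [← intervalIntegral.integral_Iic_sub_Iic (hint 0) (hint x)]; abel
  rw [hsplit]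
  exact (intervalIntegral.integral_hasDerivAt_right (hg.intervalIntegrable 0 t)
    (hg.stronglyMeasurableAtFilter _ _) hg.continuousAt).const_add _

theorem hasDerivAt_integral_Ici [CompleteSpace E] (hg : Continuous g)
    (hint : ∀ x, IntegrableOn g (Ici x)) (t : ℝ) :
    HasDerivAt (fun x => ∫ s in Ici x, g s) (-g t) t := by
  have hneg : HasDerivAt (fun x => ∫ s in Iic x, g (-s)) (g (-(-t))) (-t) :=
    hasDerivAt_integral_Iic (by fun_prop) (fun x => by simpa using (hint (-x)).comp_neg_Iic) (-t)
  simp_rw [integral_Ici_eq_integral_Iic_comp_neg g]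
  simpa only [neg_neg] using HasDerivAt.comp_neg hneg

end HalfLine

theorem variation_of_parameters {y₁ y₁' y₂ y₂' q F I₁ I₂ u : ℝ → ℝ} {D : ℝ}
    (hy₁ : ∀ t, HasDerivAt y₁ (y₁' t) t) (hy₁' : ∀ t, HasDerivAt y₁' (-(q t * y₁ t)) t)
    (hy₂ : ∀ t, HasDerivAt y₂ (y₂' t) t) (hy₂' : ∀ t, HasDerivAt y₂' (-(q t * y₂ t)) t)
    (hW : ∀ t, y₁' t * y₂ t - y₁ t * y₂' t = D) (hD : D ≠ 0)
    (hI₁ : ∀ t, HasDerivAt I₁ (y₂ t * F t) t) (hI₂ : ∀ t, HasDerivAt I₂ (-(y₁ t * F t)) t)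
    (hu : ∀ t, u t = (y₁ t * I₁ t + y₂ t * I₂ t) / D) :
    (∀ t, DifferentiableAt ℝ u t) ∧ (∀ t, DifferentiableAt ℝ (deriv u) t) ∧
      ∀ t, deriv (deriv u) t + q t * u t = F t := by
  set u' : ℝ → ℝ := fun t => (y₁' t * I₁ t + y₂' t * I₂ t) / D
  have hu' : ∀ t, HasDerivAt u (u' t) t := fun t => by
    rw [funext hu]
    refine ((((hy₁ t).mul (hI₁ t)).add ((hy₂ t).mul (hI₂ t))).div_const D).congr_deriv ?_
    ring
  have hu'' : ∀ t, HasDerivAt u' (F t - q t * u t) t := fun t => by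
    refine ((((hy₁' t).mul (hI₁ t)).add ((hy₂' t).mul (hI₂ t))).div_const D).congr_deriv ?_
    rw [hu]
    field_simp
    linear_combination F t * hW t
  have hderiv : deriv u = u' := funext fun t => (hu' t).deriv
  refine ⟨fun t => (hu' t).differentiableAt, fun t => hderiv ▸ (hu'' t).differentiableAt,
    fun t => ?_⟩
  rw [hderiv, (hu'' t).deriv]
  ring

section ExpWeight

variable {g : ℝ → ℝ} {K a t : ℝ}

theorem integrableOn_Iic_of_abs_le_mul_exp (ha : 0 < a)
    (hg : AEStronglyMeasurable g (volume.restrict (Iic t)))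
    (hbound : ∀ s ≤ t, |g s| ≤ K * exp (a * s)) : IntegrableOn g (Iic t) :=
  ((integrableOn_exp_mul_Iic ha t).const_mul K).mono' hg <| by
    filter_upwards [ae_restrict_mem measurableSet_Iic] with s hs using hbound s hs

theorem abs_integral_Iic_le_of_abs_le_mul_exp (ha : 0 < a)
    (hbound : ∀ s ≤ t, |g s| ≤ K * exp (a * s)) :
    |∫ s in Iic t, g s| ≤ K * exp (a * t) / a := by
  have hae : ∀ᵐ s ∂volume.restrict (Iic t), ‖g s‖ ≤ K * exp (a * s) := by
    filter_upwards [ae_restrict_mem measurableSet_Iic] with s hs using hbound s hs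
  calc |∫ s in Iic t, g s| ≤ ∫ s in Iic t, K * exp (a * s) :=
        norm_integral_le_of_norm_le ((integrableOn_exp_mul_Iic ha t).const_mul K) hae
    _ = K * exp (a * t) / a := by rw [integral_const_mul, integral_exp_mul_Iic ha, mul_div_assoc]

end ExpWeight

noncomputable def jacobiSol (n t : ℝ) : ℝ := (n + tanh t) * exp (-n * t)

noncomputable def jacobiSolDeriv (n t : ℝ) : ℝ :=
  (1 - tanh t ^ 2 - n * (n + tanh t)) * exp (-n * t)

theorem jacobiSol_neg (n t : ℝ) : jacobiSol n (-t) = (n - tanh t) * exp (n * t) := by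
  simp [jacobiSol, tanh_neg, sub_eq_add_neg]

theorem abs_jacobiSol_le {n : ℝ} (hn : 0 ≤ n) (t : ℝ) :
    |jacobiSol n t| ≤ (n + 1) * exp (-n * t) := by
  rw [jacobiSol, abs_mul, abs_of_pos (exp_pos _)]
  gcongr
  exact (abs_add_le _ _).trans (by rw [abs_of_nonneg hn]; linarith [(abs_tanh_lt_one t).le])

theorem hasDerivAt_jacobiSol (n t : ℝ) : HasDerivAt (jacobiSol n) (jacobiSolDeriv n t) t := by
  have hexp : HasDerivAt (fun x => exp (-n * x)) (exp (-n * t) * -n) t := by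
    simpa using ((hasDerivAt_id t).const_mul (-n)).exp
  exact (((hasDerivAt_tanh t).const_add n).mul hexp).congr_deriv (by rw [jacobiSolDeriv]; ring)

theorem hasDerivAt_jacobiSolDeriv (n t : ℝ) :
    HasDerivAt (jacobiSolDeriv n) (-((2 * (cosh t)⁻¹ ^ 2 - n ^ 2) * jacobiSol n t)) t := by
  have hexp : HasDerivAt (fun x => exp (-n * x)) (exp (-n * t) * -n) t := by
    simpa using ((hasDerivAt_id t).const_mul (-n)).exp
  have htanh := hasDerivAt_tanh t
  have hpoly := ((htanh.pow 2).const_sub 1).sub ((htanh.const_add n).const_mul n)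
  refine (hpoly.mul hexp).congr_deriv ?_
  simp only [Pi.sub_apply, Pi.pow_apply]
  rw [jacobiSol, inv_cosh_sq]
  ring

theorem hasDerivAt_jacobiSol_comp_neg (n t : ℝ) :
    HasDerivAt (fun x => jacobiSol n (-x)) (-jacobiSolDeriv n (-t)) t :=
  HasDerivAt.comp_neg (hasDerivAt_jacobiSol n (-t))

theorem hasDerivAt_jacobiSolDeriv_comp_neg (n t : ℝ) :
    HasDerivAt (fun x => -jacobiSolDeriv n (-x))
      (-((2 * (cosh t)⁻¹ ^ 2 - n ^ 2) * jacobiSol n (-t))) t := by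
  simpa only [cosh_neg, neg_neg] using
    (HasDerivAt.comp_neg (hasDerivAt_jacobiSolDeriv n (-t))).fun_neg

theorem jacobiSol_wronskian (n t : ℝ) :
    jacobiSolDeriv n t * jacobiSol n (-t) + jacobiSol n t * jacobiSolDeriv n (-t) =
      2 * n * (1 - n ^ 2) := by
  have hexp : exp (-n * t) * exp (-n * -t) = 1 := by rw [← exp_add]; simp
  simp only [jacobiSol, jacobiSolDeriv, tanh_neg]
  linear_combination (2 * n * (1 - n ^ 2)) * hexp

section FourierMode

variable {n γ M : ℝ} {F : ℝ → ℝ}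

theorem abs_sub_tanh_mul_exp_mul_le (hn : 0 ≤ n) (hγ : 0 ≤ γ)
    (hF : ∀ s, |F s| ≤ M * exp (γ * |s|)) {s t : ℝ} (hst : s ≤ t) :
    |(n - tanh s) * exp (n * s) * F s| ≤
      (n + 1) * M * exp (γ * t + γ * |t|) * exp ((n - γ) * s) := by
  have hM : 0 ≤ M := nonneg_of_mul_nonneg_left ((abs_nonneg _).trans (hF 0)) (exp_pos _)
  have hweight : n * s + γ * |s| ≤ γ * t + γ * |t| + (n - γ) * s := by
    have : |s| ≤ |t| + t - s := by cases abs_cases s <;> cases abs_cases t <;> linarith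
    nlinarith
  rw [← jacobiSol_neg, abs_mul]
  calc |jacobiSol n (-s)| * |F s| ≤ (n + 1) * exp (-n * -s) * (M * exp (γ * |s|)) :=
        mul_le_mul (abs_jacobiSol_le hn (-s)) (hF s) (abs_nonneg _)
          (mul_nonneg (by linarith) (exp_pos _).le)
    _ = (n + 1) * M * exp (n * s + γ * |s|) := by rw [neg_mul_neg, exp_add]; ring
    _ ≤ (n + 1) * M * exp (γ * t + γ * |t| + (n - γ) * s) := by gcongr
    _ = _ := by rw [exp_add]; ring

theorem integrableOn_Iic_sub_tanh_mul_exp_mul (hγ : 0 ≤ γ) (hγn : γ < n) (hFc : Continuous F)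
    (hF : ∀ s, |F s| ≤ M * exp (γ * |s|)) (t : ℝ) :
    IntegrableOn (fun s => (n - tanh s) * exp (n * s) * F s) (Iic t) :=
  integrableOn_Iic_of_abs_le_mul_exp (sub_pos.2 hγn)
    (by fun_prop : Continuous _).aestronglyMeasurable
    fun _ hs => abs_sub_tanh_mul_exp_mul_le (hγ.trans hγn.le) hγ hF hs

theorem abs_integral_Iic_sub_tanh_mul_exp_mul_le (hγ : 0 ≤ γ) (hγn : γ < n)
    (hF : ∀ s, |F s| ≤ M * exp (γ * |s|)) (t : ℝ) :
    |∫ s in Iic t, (n - tanh s) * exp (n * s) * F s| ≤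
      (n + 1) * M * exp (n * t + γ * |t|) / (n - γ) := by
  convert abs_integral_Iic_le_of_abs_le_mul_exp (sub_pos.2 hγn)
    fun _ hs => abs_sub_tanh_mul_exp_mul_le (hγ.trans hγn.le) hγ hF hs using 2
  rw [mul_assoc ((n + 1) * M), ← exp_add]
  ring_nf

theorem abs_jacobiSol_mul_integral_Iic_le (hγ : 0 ≤ γ) (hγn : γ < n)
    (hF : ∀ s, |F s| ≤ M * exp (γ * |s|)) (t : ℝ) :
    |jacobiSol n t * ∫ s in Iic t, (n - tanh s) * exp (n * s) * F s| ≤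
      (n + 1) ^ 2 / (n - γ) * (M * exp (γ * |t|)) := by
  have hn : 0 ≤ n := hγ.trans hγn.le
  rw [abs_mul]
  calc _ ≤ (n + 1) * exp (-n * t) * ((n + 1) * M * exp (n * t + γ * |t|) / (n - γ)) :=
        mul_le_mul (abs_jacobiSol_le hn t) (abs_integral_Iic_sub_tanh_mul_exp_mul_le hγ hγn hF t)
          (abs_nonneg _) (mul_nonneg (by linarith) (exp_pos _).le)
    _ = _ := by
        have hexp : exp (-n * t) * exp (n * t) = 1 := by rw [← exp_add]; simp
        rw [exp_add]
        linear_combination (n + 1) ^ 2 / (n - γ) * (M * exp (γ * |t|)) * hexp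

theorem integral_Ici_add_tanh_mul_exp_mul (n : ℝ) (F : ℝ → ℝ) (t : ℝ) :
    ∫ s in Ici t, (n + tanh s) * exp (-n * s) * F s =
      ∫ s in Iic (-t), (n - tanh s) * exp (n * s) * F (-s) := by
  rw [integral_Ici_eq_integral_Iic_comp_neg]
  simp only [tanh_neg, neg_mul_neg, ← sub_eq_add_neg]

theorem integrableOn_Ici_add_tanh_mul_exp_mul (hγ : 0 ≤ γ) (hγn : γ < n) (hFc : Continuous F)
    (hF : ∀ s, |F s| ≤ M * exp (γ * |s|)) (t : ℝ) :
    IntegrableOn (fun s => (n + tanh s) * exp (-n * s) * F s) (Ici t) := by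
  have := (integrableOn_Iic_sub_tanh_mul_exp_mul (F := fun s => F (-s)) hγ hγn (by fun_prop)
    (fun s => by simpa using hF (-s)) (-t)).comp_neg_Ici
  simpa only [tanh_neg, sub_neg_eq_add, neg_neg, mul_neg, neg_mul] using this

end FourierMode

theorem abs_add_div_le_of_abs_le {n γ B X Y : ℝ} (hn : 2 ≤ n) (hγ : γ ≤ 1)
    (hX : |X| ≤ (n + 1) ^ 2 / (n - γ) * B) (hY : |Y| ≤ (n + 1) ^ 2 / (n - γ) * B) :
    |(X + Y) / (2 * n * (1 - n ^ 2))| ≤ 16 / (n ^ 2 + 1) * B := by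
  have hnγ : 0 < n - γ := by linarith
  have hN : 0 < n * (n ^ 2 - 1) := by nlinarith
  have hB : 0 ≤ B := nonneg_of_mul_nonneg_right ((abs_nonneg X).trans hX) (by positivity)
  have hconst : (n + 1) ^ 2 / ((n - γ) * (n * (n ^ 2 - 1))) ≤ 16 / (n ^ 2 + 1) := by
    rw [div_le_div_iff₀ (by positivity) (by positivity)]
    nlinarith [mul_le_mul_of_nonneg_left (show n - 1 ≤ n - γ by linarith) hN.le]
  rw [abs_div, show |2 * n * (1 - n ^ 2)| = 2 * (n * (n ^ 2 - 1)) by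
    rw [abs_of_neg (by nlinarith)]; ring]
  calc _ ≤ 2 * ((n + 1) ^ 2 / (n - γ) * B) / (2 * (n * (n ^ 2 - 1))) := by
        gcongr
        linarith [abs_add_le X Y]
    _ = (n + 1) ^ 2 / ((n - γ) * (n * (n ^ 2 - 1))) * B := by
        field_simp
    _ ≤ 16 / (n ^ 2 + 1) * B := by gcongr

/-- The decaying solutions of the `n`-th Fourier-mode ODE `u'' + (2 sech² t − n²) u = F`
on the catenoidal cylinder, for `n ≥ 2` and inhomogeneous term of growth `M e^{γ|t|}`
with `γ ∈ (0,1)`: the explicit variation-of-parameters formula is well defined (both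
integrals converge absolutely), solves the equation, and obeys the weighted bound
`|uₙ(t)| ≤ (C(γ)/(n²+1)) M e^{γ|t|}`. -/
theorem fourier_mode_ode_solution (γ : ℝ) (hγ : γ ∈ Set.Ioo (0:ℝ) 1) :
    ∃ C : ℝ, 0 < C ∧
      ∀ (n : ℕ), 2 ≤ n → ∀ (M : ℝ), 0 < M → ∀ (F : ℝ → ℝ), Continuous F →
        (∀ t : ℝ, |F t| ≤ M * Real.exp (γ * |t|)) →
        let u : ℝ → ℝ := fun t =>
          ((n + Real.tanh t) / (2 * n * (1 - (n:ℝ) ^ 2))) * Real.exp (-(n:ℝ) * t) *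
              (∫ s in Set.Iic t, ((n:ℝ) - Real.tanh s) * Real.exp ((n:ℝ) * s) * F s) +
            ((n - Real.tanh t) / (2 * n * (1 - (n:ℝ) ^ 2))) * Real.exp ((n:ℝ) * t) *
              (∫ s in Set.Ici t, ((n:ℝ) + Real.tanh s) * Real.exp (-(n:ℝ) * s) * F s)
        (∀ t : ℝ, IntegrableOn
            (fun s => ((n:ℝ) - Real.tanh s) * Real.exp ((n:ℝ) * s) * F s) (Set.Iic t)) ∧
          (∀ t : ℝ, IntegrableOn
            (fun s => ((n:ℝ) + Real.tanh s) * Real.exp (-(n:ℝ) * s) * F s) (Set.Ici t)) ∧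
          (∀ t, DifferentiableAt ℝ u t) ∧
          (∀ t, DifferentiableAt ℝ (deriv u) t) ∧
          (∀ t, deriv (deriv u) t + (2 * ((Real.cosh t)⁻¹) ^ 2 - (n:ℝ) ^ 2) * u t = F t) ∧
          (∀ t, |u t| ≤ C / ((n:ℝ) ^ 2 + 1) * M * Real.exp (γ * |t|)) := by
  obtain ⟨hγ₀, hγ₁⟩ := hγ
  refine ⟨16, by norm_num, fun n hn M _ F hFc hF => ?_⟩
  intro u
  have hn₂ : (2 : ℝ) ≤ n := by exact_mod_cast hn
  have hγn : γ < n := by linarith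
  have hint₁ := integrableOn_Iic_sub_tanh_mul_exp_mul hγ₀.le hγn hFc hF
  have hint₂ := integrableOn_Ici_add_tanh_mul_exp_mul hγ₀.le hγn hFc hF
  have hu : ∀ t, u t = (jacobiSol n t * (∫ s in Iic t, (n - tanh s) * exp (n * s) * F s) +
      jacobiSol n (-t) * ∫ s in Ici t, (n + tanh s) * exp (-n * s) * F s) /
        (2 * n * (1 - (n : ℝ) ^ 2)) := fun t => by
    simp only [u, jacobiSol, tanh_neg, neg_mul_neg]
    ring
  obtain ⟨hdiff, hdiff', hode⟩ := variation_of_parameters (hasDerivAt_jacobiSol n)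
    (hasDerivAt_jacobiSolDeriv n) (hasDerivAt_jacobiSol_comp_neg n)
    (hasDerivAt_jacobiSolDeriv_comp_neg n) (fun t => by rw [← jacobiSol_wronskian n t]; ring)
    (by nlinarith)
    (fun t => (hasDerivAt_integral_Iic (by fun_prop) hint₁ t).congr_deriv (by rw [jacobiSol_neg]))
    (fun t => (hasDerivAt_integral_Ici (by fun_prop) hint₂ t).congr_deriv (by rw [jacobiSol]))
    hu
  refine ⟨hint₁, hint₂, hdiff, hdiff', hode, fun t => ?_⟩
  have h₂ := abs_jacobiSol_mul_integral_Iic_le hγ₀.le hγn (fun s => by simpa using hF (-s)) (-t)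
  rw [← integral_Ici_add_tanh_mul_exp_mul, abs_neg] at h₂
  rw [hu t, mul_assoc _ M]
  exact abs_add_div_le_of_abs_le hn₂ hγ₁.le (abs_jacobiSol_mul_integral_Iic_le hγ₀.le hγn hF t) h₂
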